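/- arXiv:2509.00847 — 3 statements merged into one kernel-verified Lean document; each statement's English description precedes it below -/
import Mathlib

section
/- Let d ≥ 1, τ > 0, let A : ℝ → ℝ^{d×d} be continuous and τ-periodic, and let U : ℝ → ℝ^{d×d} be a principal matrix solution of A. Then there exists a differentiable, τ-periodic, not identically zero function x : ℝ → ℝ^d with x'(t) = A(t)x(t) for all t ∈ ℝ if and only if det(I − U(τ)) = 0. -/
/-!
Every solution of `x' = A x` is `x t = U t *ᵥ x 0`, by uniqueness for linear ODEs. Hence a
`τ`-periodic solution gives a fixed vector `x 0 ≠ 0` of `U τ`. Conversely, if `U τ *ᵥ v = v`,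
then `t ↦ U (t + τ) *ᵥ v` solves the same (`τ`-periodic) equation as `t ↦ U t *ᵥ v` with the
same value at `0`, so the two coincide.
-/

attribute [local instance] Matrix.normedAddCommGroup Matrix.normedSpace

open Set Matrix

theorem ODE_linear_solution_unique {E : Type*} [NormedAddCommGroup E] [NormedSpace ℝ E]
    {B : ℝ → E →L[ℝ] E} (hB : Continuous B) {f g : ℝ → E} {t₀ : ℝ}
    (hf : ∀ t, HasDerivAt f (B t (f t)) t) (hg : ∀ t, HasDerivAt g (B t (g t)) t)
    (heq : f t₀ = g t₀) : f = g := by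
  ext t
  obtain ⟨a, b, ht, ht₀⟩ : ∃ a b, t ∈ Ioo a b ∧ t₀ ∈ Ioo a b :=
    ⟨min t t₀ - 1, max t t₀ + 1, by grind, by grind⟩
  obtain ⟨C, hC⟩ := (isCompact_Icc (a := a) (b := b)).exists_bound_of_continuousOn
    hB.continuousOn
  have hLip : ∀ s ∈ Ioo a b, LipschitzOnWith C.toNNReal (B s) univ := fun s hs =>
    (ContinuousLinearMap.lipschitzWith_of_opNorm_le
      ((hC s (Ioo_subset_Icc_self hs)).trans (Real.le_coe_toNNReal C))).lipschitzOnWith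
  exact ODE_solution_unique_of_mem_Ioo hLip ht₀ (fun s _ => ⟨hf s, mem_univ _⟩)
    (fun s _ => ⟨hg s, mem_univ _⟩) heq ht

section MatrixODE

variable {n : Type*} [Fintype n]

theorem HasDerivAt.matrix_mulVec_const {U : ℝ → Matrix n n ℝ} {U' : Matrix n n ℝ} {t : ℝ}
    (hU : HasDerivAt U U' t) (v : n → ℝ) : HasDerivAt (fun s => U s *ᵥ v) (U' *ᵥ v) t :=
  (LinearMap.toContinuousLinearMap ((mulVecBilin ℝ ℝ).flip v)).hasFDerivAt.comp_hasDerivAt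
    (F := Matrix n n ℝ) t hU

theorem Continuous.toContinuousLinearMap_mulVecLin {A : ℝ → Matrix n n ℝ} (hA : Continuous A) :
    Continuous fun t => LinearMap.toContinuousLinearMap (A t).mulVecLin :=
  (LinearMap.toContinuousLinearMap.toLinearMap ∘ₗ mulVecBilin ℝ ℝ :
    Matrix n n ℝ →ₗ[ℝ] (n → ℝ) →L[ℝ] (n → ℝ)).continuous_of_finiteDimensional.comp hA

variable {A : ℝ → Matrix n n ℝ} {x y : ℝ → n → ℝ}

theorem matrix_ODE_solution_unique (hA : Continuous A)
    (hx : ∀ t, HasDerivAt x (A t *ᵥ x t) t) (hy : ∀ t, HasDerivAt y (A t *ᵥ y t) t)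
    {t₀ : ℝ} (heq : x t₀ = y t₀) : x = y :=
  ODE_linear_solution_unique hA.toContinuousLinearMap_mulVecLin hx hy heq

theorem Function.Periodic.of_matrix_ODE_solution {τ : ℝ} (hA : Continuous A)
    (hAper : Function.Periodic A τ) (hx : ∀ t, HasDerivAt x (A t *ᵥ x t) t) (hxτ : x τ = x 0) :
    Function.Periodic x τ := by
  have hshift : ∀ t, HasDerivAt (fun s => x (s + τ)) (A t *ᵥ x (t + τ)) t := fun t => by
    simpa [hAper t] using (hx (t + τ)).comp_add_const t τ
  exact congrFun (matrix_ODE_solution_unique hA hshift hx (t₀ := 0) (by simpa using hxτ))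

variable {U : ℝ → Matrix n n ℝ}

theorem hasDerivAt_mulVec_of_principal (hU : ∀ t, HasDerivAt U (A t * U t) t) (v : n → ℝ)
    (t : ℝ) : HasDerivAt (fun s => U s *ᵥ v) (A t *ᵥ (U t *ᵥ v)) t := by
  simpa only [mulVec_mulVec] using (hU t).matrix_mulVec_const v

theorem eq_mulVec_of_principal [DecidableEq n] (hA : Continuous A) (hU0 : U 0 = 1)
    (hU : ∀ t, HasDerivAt U (A t * U t) t) (hx : ∀ t, HasDerivAt x (A t *ᵥ x t) t) (t : ℝ) :
    x t = U t *ᵥ x 0 :=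
  congrFun (matrix_ODE_solution_unique hA hx (hasDerivAt_mulVec_of_principal hU (x 0))
    (t₀ := 0) (by simp [hU0])) t

end MatrixODE

theorem stmt_2_general (d : ℕ) (τ : ℝ)
    (A : ℝ → Matrix (Fin d) (Fin d) ℝ) (hA : Continuous A)
    (hAper : ∀ t : ℝ, A (t + τ) = A t)
    (U : ℝ → Matrix (Fin d) (Fin d) ℝ)
    (hU0 : U 0 = 1)
    (hU : ∀ t : ℝ, HasDerivAt U (A t * U t) t) :
    (∃ x : ℝ → Fin d → ℝ,
      (∀ t : ℝ, HasDerivAt x ((A t).mulVec (x t)) t) ∧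
      (∀ t : ℝ, x (t + τ) = x t) ∧
      (∃ t : ℝ, x t ≠ 0)) ↔
    Matrix.det (1 - U τ) = 0 := by
  rw [← exists_mulVec_eq_zero_iff]
  constructor
  · rintro ⟨x, hx, hxper, t₀, hxt₀⟩
    have hxU := eq_mulVec_of_principal hA hU0 hU hx
    refine ⟨x 0, fun h => hxt₀ (by rw [hxU t₀, h, mulVec_zero]), ?_⟩
    rw [sub_mulVec, one_mulVec, ← hxU τ, ← zero_add τ, hxper 0, sub_self]
  · rintro ⟨v, hv, hUv⟩
    rw [sub_mulVec, one_mulVec, sub_eq_zero] at hUv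
    refine ⟨fun t => U t *ᵥ v, hasDerivAt_mulVec_of_principal hU v,
      Function.Periodic.of_matrix_ODE_solution hA hAper (hasDerivAt_mulVec_of_principal hU v)
        (by simp [hU0, ← hUv]), 0, by simpa [hU0] using hv⟩

/-- For `A` continuous and `τ`-periodic with principal matrix
solution `U`, there exists a differentiable, `τ`-periodic, not identically zero
solution of `x' = A x` iff `det(I − U(τ)) = 0`. -/
theorem stmt_2 (d : ℕ) (hd : 1 ≤ d) (τ : ℝ) (hτ : 0 < τ)
    (A : ℝ → Matrix (Fin d) (Fin d) ℝ) (hA : Continuous A)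
    (hAper : ∀ t : ℝ, A (t + τ) = A t)
    (U : ℝ → Matrix (Fin d) (Fin d) ℝ)
    (hU0 : U 0 = 1)
    (hU : ∀ t : ℝ, HasDerivAt U (A t * U t) t) :
    (∃ x : ℝ → Fin d → ℝ,
      (∀ t : ℝ, HasDerivAt x ((A t).mulVec (x t)) t) ∧
      (∀ t : ℝ, x (t + τ) = x t) ∧
      (∃ t : ℝ, x t ≠ 0)) ↔
    Matrix.det (1 - U τ) = 0 :=
  stmt_2_general d τ A hA hAper U hU0 hU
end

section
/- Let d ≥ 1, τ > 0, q > 0, γ > 0, μ > 0, P_1, …, P_d > 0, and let f : ℝ → ℝ be continuous, strictly positive, and τ-periodic. Define c_j(t) := P_j f(t) and the matrix B(t) ∈ ℝ^{d×d} with entries B_{jk}(t) := q c_j(t)c_k(t)P_k / (Σ_{h=1}^d c_h(t)P_h). Set R₀ := (1/(γ+μ)) Σ_{k=1}^d (1/τ)∫_0^τ B_{kk}(θ) dθ, and define φ : ℝ → ℝ^d by φ_j(t) := P_j · exp((1/R₀)∫_0^t Σ_{k=1}^d B_{kk}(θ) dθ − (γ+μ)t). Then R₀ > 0, φ is continuously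 differentiable, τ-periodic, has strictly positive components, and satisfies B(t)φ(t) = R₀(φ'(t) + (γ+μ)φ(t)) for all t ∈ ℝ. -/
/-!
With `c_j = P_j f`, the transmission matrix is `B(t) = f(t) • P (q P² / ΣP²)ᵀ`, a rank-one
matrix with eigenvector `P` for the eigenvalue `tr B(t)`. The ansatz `φ(t) = ψ(t) P` thus
reduces the generalized eigenvalue equation to the scalar equation
`R₀ (ψ' + (γ + μ) ψ) = tr B(t) ψ`, solved by `ψ(t) = exp ((1/R₀) ∫₀ᵗ tr B - (γ + μ) t)`;
`ψ` is `τ`-periodic precisely because `R₀ (γ + μ) τ = ∫₀^τ tr B`, which is how `R₀` is defined.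
-/

open Matrix

theorem Matrix.vecMulVec_mulVec_self {n R : Type*} [Fintype n] [CommSemiring R] (u v : n → R) :
    vecMulVec u v *ᵥ u = (vecMulVec u v).trace • u := by
  rw [vecMulVec_mulVec, trace_vecMulVec, op_smul_eq_smul, dotProduct_comm]

noncomputable def expScaledPrimitive (g : ℝ → ℝ) (R m t : ℝ) : ℝ :=
  Real.exp ((1 / R) * (∫ θ in (0:ℝ)..t, g θ) - m * t)

section expScaledPrimitive

variable {g : ℝ → ℝ} {R m τ : ℝ}

theorem hasDerivAt_expScaledPrimitive (hg : Continuous g) (t : ℝ) :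
    HasDerivAt (expScaledPrimitive g R m)
      (expScaledPrimitive g R m t * ((1 / R) * g t - m)) t := by
  have hexp := (((hg.integral_hasStrictDerivAt 0 t).hasDerivAt.const_mul (1 / R)).sub
    ((hasDerivAt_id t).const_mul m)).exp
  unfold expScaledPrimitive
  simpa using hexp

theorem contDiff_expScaledPrimitive (hg : Continuous g) :
    ContDiff ℝ 1 (expScaledPrimitive g R m) := by
  rw [contDiff_one_iff_deriv]
  refine ⟨fun t => (hasDerivAt_expScaledPrimitive hg t).differentiableAt, ?_⟩
  rw [funext fun t => (hasDerivAt_expScaledPrimitive (R := R) (m := m) hg t).deriv]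
  have hcont : Continuous (expScaledPrimitive g R m) :=
    continuous_iff_continuousAt.2 fun t => (hasDerivAt_expScaledPrimitive hg t).continuousAt
  fun_prop

theorem expScaledPrimitive_pos (t : ℝ) : 0 < expScaledPrimitive g R m t := Real.exp_pos _

theorem mul_deriv_add_expScaledPrimitive (hg : Continuous g) (hR : R ≠ 0) (t : ℝ) :
    R * (deriv (expScaledPrimitive g R m) t + m * expScaledPrimitive g R m t) =
      g t * expScaledPrimitive g R m t := by
  rw [(hasDerivAt_expScaledPrimitive hg t).deriv]
  field_simp
  ring

theorem periodic_expScaledPrimitive (hg : Continuous g) (hper : Function.Periodic g τ)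
    (hR : R ≠ 0) (hint : ∫ θ in (0:ℝ)..τ, g θ = R * m * τ) :
    Function.Periodic (expScaledPrimitive g R m) τ := by
  intro t
  have hsplit : ∫ θ in (0:ℝ)..t + τ, g θ = (∫ θ in (0:ℝ)..t, g θ) + R * m * τ := by
    rw [← intervalIntegral.integral_add_adjacent_intervals (hg.intervalIntegrable 0 t)
      (hg.intervalIntegrable t (t + τ)), hper.intervalIntegral_add_eq t 0, zero_add, hint]
  simp only [expScaledPrimitive, hsplit]
  congr 1
  field_simp
  ring

theorem pos_of_integral_eq_mul (hg : Continuous g) (hgpos : ∀ t, 0 < g t) (hτ : 0 < τ)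
    (hm : 0 < m) (hint : ∫ θ in (0:ℝ)..τ, g θ = R * m * τ) : 0 < R := by
  have hpos := intervalIntegral.intervalIntegral_pos_of_pos (hg.intervalIntegrable 0 τ) hgpos hτ
  rw [hint, mul_assoc] at hpos
  exact pos_of_mul_pos_left hpos (by positivity)

end expScaledPrimitive

theorem mulVec_expScaledPrimitive_smul {n : Type*} [Fintype n] {g : ℝ → ℝ} {R m : ℝ}
    {B : ℝ → Matrix n n ℝ} {v : n → ℝ} (hg : Continuous g) (hR : R ≠ 0)
    (hBv : ∀ t, B t *ᵥ v = g t • v) (t : ℝ) :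
    B t *ᵥ (expScaledPrimitive g R m t • v) =
      R • (deriv (fun s => expScaledPrimitive g R m s • v) t +
        m • expScaledPrimitive g R m t • v) := by
  set ψ := expScaledPrimitive g R m
  calc B t *ᵥ (ψ t • v) = (g t * ψ t) • v := by
        rw [mulVec_smul, hBv, smul_smul, mul_comm]
    _ = (R * (deriv ψ t + m * ψ t)) • v := by rw [mul_deriv_add_expScaledPrimitive hg hR]
    _ = R • (deriv (fun s => ψ s • v) t + m • ψ t • v) := by
      rw [deriv_smul_const (hasDerivAt_expScaledPrimitive hg t).differentiableAt]
      module

noncomputable def proportionateMixing {d : ℕ} (q : ℝ) (P : Fin d → ℝ) :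
    Matrix (Fin d) (Fin d) ℝ :=
  vecMulVec P fun k => q / (∑ h, P h ^ 2) * P k ^ 2

theorem smul_proportionateMixing_apply {d : ℕ} (q : ℝ) (P : Fin d → ℝ) {x : ℝ} (hx : x ≠ 0)
    (j k : Fin d) :
    (x • proportionateMixing q P) j k =
      q * (P j * x) * (P k * x) * P k / ∑ h, P h * x * P h := by
  have hden : ∑ h, P h * x * P h = x * ∑ h, P h ^ 2 := by
    rw [Finset.mul_sum]
    exact Finset.sum_congr rfl fun h _ => by ring
  rw [hden, Matrix.smul_apply, proportionateMixing, vecMulVec_apply, smul_eq_mul]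
  field_simp

theorem proportionateMixing_mulVec_self {d : ℕ} (q : ℝ) (P : Fin d → ℝ) :
    proportionateMixing q P *ᵥ P = (proportionateMixing q P).trace • P :=
  vecMulVec_mulVec_self _ _

theorem trace_proportionateMixing_pos {d : ℕ} [NeZero d] {q : ℝ} (hq : 0 < q) {P : Fin d → ℝ}
    (hP : ∀ j, 0 < P j) : 0 < (proportionateMixing q P).trace := by
  have hS : 0 < ∑ h, P h ^ 2 := Finset.sum_pos (fun h _ => pow_pos (hP h) 2) Finset.univ_nonempty
  exact Finset.sum_pos (fun k _ => mul_pos (hP k) (mul_pos (div_pos hq hS) (pow_pos (hP k) 2)))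
    Finset.univ_nonempty

/-- For the multi-group SIR model with contact rates
`c_j(t) = P_j f(t)`, the number `R₀ = (1/(γ+μ)) Σ_k (1/τ)∫_0^τ B_{kk}` is a
positive generalized eigenvalue of the pair `(B, 𝓜)` (with transition matrix
`(γ+μ)I`), with explicit `C¹`, `τ`-periodic, strictly positive generalized
eigenfunction `φ`. -/
theorem stmt_7 (d : ℕ) (hd : 1 ≤ d) (τ q γ μ : ℝ)
    (hτ : 0 < τ) (hq : 0 < q) (hγ : 0 < γ) (hμ : 0 < μ)
    (P : Fin d → ℝ) (hP : ∀ j, 0 < P j)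
    (f : ℝ → ℝ) (hf : Continuous f) (hfpos : ∀ t : ℝ, 0 < f t)
    (hfper : ∀ t : ℝ, f (t + τ) = f t)
    (c : Fin d → ℝ → ℝ) (hc : ∀ j (t : ℝ), c j t = P j * f t)
    (B : ℝ → Matrix (Fin d) (Fin d) ℝ)
    (hB : ∀ (t : ℝ) (j k : Fin d),
      B t j k = q * c j t * c k t * P k / (∑ h : Fin d, c h t * P h))
    (R₀ : ℝ)
    (hR₀ : R₀ = (1 / (γ + μ)) * ∑ k : Fin d, (1 / τ) * ∫ θ in (0:ℝ)..τ, B θ k k)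
    (φ : ℝ → Fin d → ℝ)
    (hφ : ∀ (t : ℝ) (j : Fin d),
      φ t j = P j * Real.exp
        ((1 / R₀) * (∫ θ in (0:ℝ)..t, ∑ k : Fin d, B θ k k) - (γ + μ) * t)) :
    0 < R₀ ∧ ContDiff ℝ 1 φ ∧ (∀ t : ℝ, φ (t + τ) = φ t) ∧
      (∀ (t : ℝ) (j : Fin d), 0 < φ t j) ∧
      (∀ t : ℝ, (B t).mulVec (φ t) = R₀ • (deriv φ t + (γ + μ) • φ t)) := by
  have : NeZero d := ⟨by omega⟩
  have hB_smul : ∀ t, B t = f t • proportionateMixing q P := fun t => by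
    ext j k
    rw [hB, smul_proportionateMixing_apply q P (hfpos t).ne']
    simp only [hc]
  set g := fun t => (proportionateMixing q P).trace * f t
  have hg : Continuous g := by fun_prop
  have htrace : (fun θ => ∑ k, B θ k k) = g := funext fun θ => by
    change (B θ).trace = (proportionateMixing q P).trace * f θ
    rw [hB_smul, trace_smul, smul_eq_mul, mul_comm]
  have hint : ∫ θ in (0:ℝ)..τ, g θ = R₀ * (γ + μ) * τ := by
    have hdiag : ∀ k, Continuous fun θ => B θ k k := fun k => by
      simp only [hB_smul, Matrix.smul_apply]; fun_prop
    rw [hR₀, ← Finset.mul_sum, ← intervalIntegral.integral_finsetSum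
      fun k _ => (hdiag k).intervalIntegrable 0 τ, htrace]
    field_simp
  have hR₀pos : 0 < R₀ :=
    pos_of_integral_eq_mul hg
      (fun t => mul_pos (trace_proportionateMixing_pos hq hP) (hfpos t)) hτ (by positivity) hint
  have hφψ : φ = fun t => expScaledPrimitive g R₀ (γ + μ) t • P := by
    funext t j
    rw [hφ, htrace, Pi.smul_apply, smul_eq_mul, mul_comm]
    rfl
  have hBP : ∀ t, B t *ᵥ P = g t • P := fun t => by
    rw [hB_smul, smul_mulVec, proportionateMixing_mulVec_self, smul_smul, mul_comm]
  subst hφψ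
  exact ⟨hR₀pos, (contDiff_expScaledPrimitive hg).smul contDiff_const,
    fun t => congrArg (· • P) (periodic_expScaledPrimitive hg (fun t => by simp [g, hfper])
      hR₀pos.ne' hint t),
    fun t j => mul_pos (expScaledPrimitive_pos t) (hP j),
    mulVec_expScaledPrimitive_smul hg hR₀pos.ne' hBP⟩
end

section
/- Let d ≥ 1, let V(t,s) ∈ ℝ^{d×d}, defined for all real t ≥ s, be an evolutionary system of d×d real matrices such that (t,s) ↦ V(t,s) is continuous on {(t,s) : t ≥ s} and there exist C ≥ 1 and ω ∈ ℝ with ‖V(t,s)‖ ≤ C·e^{ω(t−s)} for all t ≥ s (operator norm induced by the Euclidean norm on ℝ^d). Fix s ≥ 0. Then N_s := sup_{t∈ℝ} ‖V(t+s, t)‖ is finite; for every Bochner-integrable φ : ℝ → ℝ^d the function t ↦ V(t, t−s)φ(t−s) is Bochner-integrable; and sup{ ∫_ℝ |V(t, t−s)φ(t−s)| dt : φ : ℝ → ℝ^d Bochner-integrable with ∫_ℝ |φ(t)| dt ≤ 1 } = N_s. -/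
/-!
For a bounded continuous family `A : ℝ → (E →L[ℝ] F)`, multiplication `φ ↦ (t ↦ A t (φ t))` has
norm `⨆ t, ‖A t‖` on `L¹(ℝ)`. The upper bound is pointwise. For the lower bound, test against the
normalized bumps `ε⁻¹ • 𝟙_(t₀, t₀+ε] • y`: their images have `L¹` norm the average of `‖A t y‖`
over `(t₀, t₀+ε]`, which tends to `‖A t₀ y‖` as `ε → 0⁺` by the fundamental theorem of calculus.
The evolution semigroup operator `T(s)` is this multiplication by `A t = V (t + s) t` followed by
translation by `s`, an isometry of `L¹`.
-/

open MeasureTheory Filter Topology Set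

section

variable {E F : Type*} [NormedAddCommGroup E] [NormedSpace ℝ E]
  [NormedAddCommGroup F] [NormedSpace ℝ F]

theorem MeasureTheory.Integrable.clm_apply_of_norm_le {α : Type*} [MeasurableSpace α]
    {μ : Measure α} {A : α → E →L[ℝ] F} {φ : α → E} {M : ℝ}
    (hA : AEStronglyMeasurable A μ) (hM : ∀ a, ‖A a‖ ≤ M) (hφ : Integrable φ μ) :
    Integrable (fun a => A a (φ a)) μ := by
  refine (hφ.norm.const_mul M).mono' ?_ (.of_forall fun a => ?_)
  · exact isBoundedBilinearMap_apply.continuous.comp_aestronglyMeasurable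
      (hA.prodMk hφ.aestronglyMeasurable)
  · exact (A a).le_of_opNorm_le (hM a) (φ a)

theorem integral_norm_clm_apply_le {α : Type*} [MeasurableSpace α]
    {μ : Measure α} {A : α → E →L[ℝ] F} {φ : α → E} {M : ℝ}
    (hA : AEStronglyMeasurable A μ) (hM : ∀ a, ‖A a‖ ≤ M) (hφ : Integrable φ μ) :
    ∫ a, ‖A a (φ a)‖ ∂μ ≤ M * ∫ a, ‖φ a‖ ∂μ := by
  rw [← integral_const_mul]
  exact integral_mono (hφ.clm_apply_of_norm_le hA hM).norm (hφ.norm.const_mul M)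
    fun a => (A a).le_of_opNorm_le (hM a) (φ a)

theorem integral_norm_clm_apply_indicator (A : ℝ → E →L[ℝ] F) {a b c : ℝ} (hab : a ≤ b)
    (hc : 0 ≤ c) (y : E) :
    ∫ t, ‖A t ((Ioc a b).indicator (fun _ => c • y) t)‖ = c * ∫ t in a..b, ‖A t y‖ := by
  have hind : (fun t => ‖A t ((Ioc a b).indicator (fun _ => c • y) t)‖) =
      (Ioc a b).indicator (fun t => c * ‖A t y‖) := by
    ext t
    by_cases ht : t ∈ Ioc a b <;>
      simp [ht, norm_smul, abs_of_nonneg hc]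
  rw [hind, integral_indicator measurableSet_Ioc, intervalIntegral.integral_of_le hab,
    integral_const_mul]

theorem norm_clm_apply_le_of_integral_norm_clm_apply_le {A : ℝ → E →L[ℝ] F}
    (hA : Continuous A) {c : ℝ}
    (hc : ∀ φ : ℝ → E, Integrable φ → ∫ t, ‖φ t‖ ≤ 1 → ∫ t, ‖A t (φ t)‖ ≤ c)
    (t₀ : ℝ) {y : E} (hy : ‖y‖ ≤ 1) : ‖A t₀ y‖ ≤ c := by
  have hg : Continuous fun t => ‖A t y‖ := (hA.clm_apply continuous_const).norm
  have hslope := (hg.integral_hasStrictDerivAt t₀ t₀).hasDerivAt.tendsto_slope_zero_right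
  simp only [intervalIntegral.integral_same, sub_zero, smul_eq_mul] at hslope
  refine le_of_tendsto hslope (eventually_mem_nhdsWithin.mono fun ε (hε : 0 < ε) => ?_)
  have hab : t₀ ≤ t₀ + ε := le_add_of_nonneg_right hε.le
  set φ : ℝ → E := (Ioc t₀ (t₀ + ε)).indicator fun _ => ε⁻¹ • y
  have hφ : Integrable φ :=
    (integrable_indicator_iff measurableSet_Ioc).2 (integrableOn_const measure_Ioc_lt_top.ne)
  have hφnorm : ∫ t, ‖φ t‖ = ‖y‖ := by
    have := integral_norm_clm_apply_indicator (fun _ => ContinuousLinearMap.id ℝ E)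
      hab (inv_nonneg.2 hε.le) y
    simp only [ContinuousLinearMap.id_apply, intervalIntegral.integral_const,
      add_sub_cancel_left, smul_eq_mul] at this
    rw [this, inv_mul_cancel_left₀ hε.ne']
  have := hc φ hφ (hφnorm.trans_le hy)
  rwa [integral_norm_clm_apply_indicator A hab (inv_nonneg.2 hε.le)] at this

theorem opNorm_le_of_integral_norm_clm_apply_le {A : ℝ → E →L[ℝ] F}
    (hA : Continuous A) {c : ℝ}
    (hc : ∀ φ : ℝ → E, Integrable φ → ∫ t, ‖φ t‖ ≤ 1 → ∫ t, ‖A t (φ t)‖ ≤ c)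
    (t₀ : ℝ) : ‖A t₀‖ ≤ c := by
  have hc0 : 0 ≤ c := by simpa using hc 0 (integrable_zero _ _ _) (by simp)
  exact ContinuousLinearMap.opNorm_le_of_unit_norm hc0 fun y hy =>
    norm_clm_apply_le_of_integral_norm_clm_apply_le hA hc t₀ hy.le

theorem sSup_integral_norm_clm_apply_eq_iSup_opNorm {A : ℝ → E →L[ℝ] F}
    (hA : Continuous A) (hbdd : BddAbove (range fun t => ‖A t‖)) :
    sSup {r | ∃ φ : ℝ → E, Integrable φ ∧ ∫ t, ‖φ t‖ ≤ 1 ∧ r = ∫ t, ‖A t (φ t)‖} =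
      ⨆ t, ‖A t‖ := by
  have hN : 0 ≤ ⨆ t, ‖A t‖ := (norm_nonneg _).trans (le_ciSup hbdd 0)
  have hle : ∀ φ : ℝ → E, Integrable φ → ∫ t, ‖φ t‖ ≤ 1 →
      ∫ t, ‖A t (φ t)‖ ≤ ⨆ t, ‖A t‖ := fun φ hφ hφ1 =>
    (integral_norm_clm_apply_le hA.aestronglyMeasurable (le_ciSup hbdd) hφ).trans
      (mul_le_of_le_one_right hN hφ1)
  have hbddS : BddAbove {r | ∃ φ : ℝ → E, Integrable φ ∧ ∫ t, ‖φ t‖ ≤ 1 ∧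
      r = ∫ t, ‖A t (φ t)‖} := ⟨⨆ t, ‖A t‖, by
    rintro _ ⟨φ, hφ, hφ1, rfl⟩; exact hle φ hφ hφ1⟩
  refine le_antisymm (csSup_le ⟨0, 0, integrable_zero _ _ _, by simp, by simp⟩ ?_)
    (ciSup_le (opNorm_le_of_integral_norm_clm_apply_le hA fun φ hφ hφ1 =>
      le_csSup hbddS ⟨φ, hφ, hφ1, rfl⟩))
  rintro _ ⟨φ, hφ, hφ1, rfl⟩
  exact hle φ hφ hφ1

end

theorem Matrix.continuous_toEuclideanCLM (n : Type*) [Fintype n] [DecidableEq n] :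
    Continuous (Matrix.toEuclideanCLM (𝕜 := ℝ) (n := n)) :=
  LinearMap.continuous_of_finiteDimensional
    (Matrix.toEuclideanCLM (𝕜 := ℝ) (n := n)).toAlgEquiv.toLinearMap

theorem stmt_11_general (d : ℕ)
    (V : ℝ → ℝ → Matrix (Fin d) (Fin d) ℝ)
    (hcont : ContinuousOn (fun p : ℝ × ℝ => V p.1 p.2) {p : ℝ × ℝ | p.2 ≤ p.1})
    (C ω : ℝ)
    (hbound : ∀ t s : ℝ, s ≤ t →
      ‖Matrix.toEuclideanCLM (𝕜 := ℝ) (V t s)‖ ≤ C * Real.exp (ω * (t - s)))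
    (s : ℝ) (hs : 0 ≤ s) :
    BddAbove (Set.range fun t : ℝ =>
        ‖Matrix.toEuclideanCLM (𝕜 := ℝ) (V (t + s) t)‖) ∧
    (∀ φ : ℝ → EuclideanSpace ℝ (Fin d), Integrable φ →
      Integrable (fun t : ℝ => Matrix.toEuclideanCLM (𝕜 := ℝ) (V t (t - s)) (φ (t - s)))) ∧
    sSup {r : ℝ | ∃ φ : ℝ → EuclideanSpace ℝ (Fin d), Integrable φ ∧
        (∫ t : ℝ, ‖φ t‖) ≤ 1 ∧
        r = ∫ t : ℝ, ‖Matrix.toEuclideanCLM (𝕜 := ℝ) (V t (t - s)) (φ (t - s))‖} =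
      ⨆ t : ℝ, ‖Matrix.toEuclideanCLM (𝕜 := ℝ) (V (t + s) t)‖ := by
  set A : ℝ → EuclideanSpace ℝ (Fin d) →L[ℝ] EuclideanSpace ℝ (Fin d) :=
    fun t => Matrix.toEuclideanCLM (𝕜 := ℝ) (V (t + s) t)
  have hA : Continuous A :=
    (Matrix.continuous_toEuclideanCLM _).comp <|
      hcont.comp_continuous (f := fun t => (t + s, t)) (by fun_prop)
        fun t => show t ≤ t + s by linarith
  have hbdd : BddAbove (range fun t => ‖A t‖) := ⟨C * Real.exp (ω * s), by
    rintro _ ⟨t, rfl⟩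
    simpa using hbound (t + s) t (by linarith)⟩
  have hshift : ∀ t, Matrix.toEuclideanCLM (𝕜 := ℝ) (V t (t - s)) = A (t - s) := by
    simp [A]
  refine ⟨hbdd, fun φ hφ => ?_, ?_⟩
  · simp_rw [hshift]
    exact (hφ.clm_apply_of_norm_le hA.aestronglyMeasurable (le_ciSup hbdd)).comp_sub_right s
  · have hshift_integral : ∀ φ : ℝ → EuclideanSpace ℝ (Fin d),
        ∫ t, ‖A (t - s) (φ (t - s))‖ = ∫ t, ‖A t (φ t)‖ :=
      fun φ => integral_sub_right_eq_self (fun t => ‖A t (φ t)‖) s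
    simp_rw [hshift, hshift_integral]
    exact sSup_integral_norm_clm_apply_eq_iSup_opNorm hA hbdd

/-- For a continuous, exponentially bounded evolutionary system
of `d × d` real matrices and `s ≥ 0`: `N_s = sup_t ‖V(t+s, t)‖` is finite, the
evolution-semigroup operator `φ ↦ (t ↦ V(t, t−s)φ(t−s))` maps integrable
functions to integrable functions, and its operator norm on `L¹(ℝ, ℝ^d)` equals
`N_s`. -/
theorem stmt_11 (d : ℕ) (hd : 1 ≤ d)
    (V : ℝ → ℝ → Matrix (Fin d) (Fin d) ℝ)
    (hid : ∀ s : ℝ, V s s = 1)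
    (hcomp : ∀ t r s : ℝ, s ≤ r → r ≤ t → V t r * V r s = V t s)
    (hcont : ContinuousOn (fun p : ℝ × ℝ => V p.1 p.2) {p : ℝ × ℝ | p.2 ≤ p.1})
    (C ω : ℝ) (hC : 1 ≤ C)
    (hbound : ∀ t s : ℝ, s ≤ t →
      ‖Matrix.toEuclideanCLM (𝕜 := ℝ) (V t s)‖ ≤ C * Real.exp (ω * (t - s)))
    (s : ℝ) (hs : 0 ≤ s) :
    BddAbove (Set.range fun t : ℝ =>
        ‖Matrix.toEuclideanCLM (𝕜 := ℝ) (V (t + s) t)‖) ∧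
    (∀ φ : ℝ → EuclideanSpace ℝ (Fin d), Integrable φ →
      Integrable (fun t : ℝ => Matrix.toEuclideanCLM (𝕜 := ℝ) (V t (t - s)) (φ (t - s)))) ∧
    sSup {r : ℝ | ∃ φ : ℝ → EuclideanSpace ℝ (Fin d), Integrable φ ∧
        (∫ t : ℝ, ‖φ t‖) ≤ 1 ∧
        r = ∫ t : ℝ, ‖Matrix.toEuclideanCLM (𝕜 := ℝ) (V t (t - s)) (φ (t - s))‖} =
      ⨆ t : ℝ, ‖Matrix.toEuclideanCLM (𝕜 := ℝ) (V (t + s) t)‖ :=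
  stmt_11_general d V hcont C ω hbound s hs
end
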